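/- Let s ≥ 2 be an integer and let F be the annealed free energy of the hierarchical pinning model with b = s. There exists c > 1 such that for all h ∈ (0,1): c^{-1} e^{-c/h} ≤ F(h) ≤ c e^{-1/(c h)}. -/

import Mathlib

open Real Filter Topology

/-! Write `d n = r h n - 1`. One step of the recursion moves `1 / d` by a bounded amount,
`1 / d - (s - 1) ≤ 1 / d' ≤ 1 / d - 1 / (d + 2)`, starting from `1 / d 0 ≈ 1 / h`. Hence `d` stays
below `4 h` for about `1 / (4 (s - 1) h)` steps, and exceeds `8` after at most `10 / h` steps.
Since `r_{n+1} ≤ r_n ^ s` and `r_{n+1} ≥ r_n ^ s / s`, the sequence `s⁻ⁿ log r_n` decreases to `F h`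
and `s⁻ⁿ (log r_n - log s / (s - 1))` increases to it, so evaluating these at the two times above
gives `F h ≤ s^{-M} · 4 h` and `F h ≥ s^{-N}`. -/

noncomputable def pinningMap (s : ℕ) (y : ℝ) : ℝ := (y ^ s + s - 1) / s

section PinningMap

variable {s : ℕ} {y : ℝ}

lemma pinningMap_sub_one (hs : s ≠ 0) (y : ℝ) : pinningMap s y - 1 = (y ^ s - 1) / s := by
  unfold pinningMap
  field_simp
  ring

lemma one_lt_pinningMap (hs : s ≠ 0) (hy : 1 < y) : 1 < pinningMap s y := by
  rw [← sub_pos, pinningMap_sub_one hs]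
  exact div_pos (sub_pos.2 (one_lt_pow₀ hy hs)) (by positivity)

lemma sub_one_add_sq_le_pinningMap_sub_one (hs : 2 ≤ s) (hy : 1 ≤ y) :
    (y - 1) + (y - 1) ^ 2 / 2 ≤ pinningMap s y - 1 := by
  obtain ⟨k, rfl⟩ := Nat.exists_eq_add_of_le' hs
  have hbernoulli : 1 + k * (y - 1) ≤ y ^ k := one_add_mul_sub_le_pow (by linarith) k
  have hd : 0 ≤ y - 1 := by linarith
  have hk : (0 : ℝ) ≤ k := k.cast_nonneg
  rw [pinningMap_sub_one (by omega), le_div_iff₀ (by positivity), pow_add]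
  push_cast
  nlinarith [mul_le_mul_of_nonneg_right hbernoulli (sq_nonneg y), mul_nonneg hk (pow_nonneg hd 3),
    mul_nonneg hk (sq_nonneg (y - 1))]

lemma pinningMap_sub_one_le (hs : s ≠ 0) (hy : 1 ≤ y) :
    pinningMap s y - 1 ≤ (y - 1) * y ^ (s - 1) := by
  have h := abs_pow_sub_pow_le y 1 s
  rw [one_pow, abs_one, abs_of_nonneg (sub_nonneg.2 (one_le_pow₀ hy)),
    abs_of_nonneg (by linarith : (0:ℝ) ≤ y - 1), abs_of_nonneg (by linarith : (0:ℝ) ≤ y),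
    max_eq_left hy] at h
  rw [pinningMap_sub_one hs, div_le_iff₀ (by positivity)]
  linarith

lemma one_sub_mul_sub_one_le_inv_pow (hy : 0 < y) (n : ℕ) : 1 - n * (y - 1) ≤ y⁻¹ ^ n := by
  have hinv : 1 - y ≤ y⁻¹ - 1 := by
    have : y⁻¹ - 1 - (1 - y) = (y - 1) ^ 2 / y := by field_simp; ring
    nlinarith [div_nonneg (sq_nonneg (y - 1)) hy.le]
  calc 1 - n * (y - 1) ≤ 1 + n * (y⁻¹ - 1) := by
        nlinarith [mul_le_mul_of_nonneg_left hinv n.cast_nonneg]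
    _ ≤ y⁻¹ ^ n := one_add_mul_sub_le_pow (by linarith [inv_pos.2 hy]) n

lemma inv_sub_one_sub_le_inv_pinningMap_sub_one (hs : s ≠ 0) (hy : 1 < y) :
    (y - 1)⁻¹ - (s - 1) ≤ (pinningMap s y - 1)⁻¹ := by
  have hd : 0 < y - 1 := by linarith
  have hcast : ((s - 1 : ℕ) : ℝ) = s - 1 := by rw [Nat.cast_sub (by omega), Nat.cast_one]
  calc (y - 1)⁻¹ - (s - 1) = (y - 1)⁻¹ * (1 - (s - 1 : ℕ) * (y - 1)) := by
        rw [hcast]; field_simp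
    _ ≤ (y - 1)⁻¹ * y⁻¹ ^ (s - 1) := by
        gcongr; exact one_sub_mul_sub_one_le_inv_pow (by linarith) _
    _ = ((y - 1) * y ^ (s - 1))⁻¹ := by rw [mul_inv, inv_pow]
    _ ≤ (pinningMap s y - 1)⁻¹ :=
        inv_anti₀ (by linarith [one_lt_pinningMap hs hy]) (pinningMap_sub_one_le hs hy.le)

lemma inv_pinningMap_sub_one_le (hs : 2 ≤ s) (hy : 1 < y) {K : ℝ} (hK : y - 1 ≤ K) :
    (pinningMap s y - 1)⁻¹ ≤ (y - 1)⁻¹ - (K + 2)⁻¹ := by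
  have hd : 0 < y - 1 := by linarith
  calc (pinningMap s y - 1)⁻¹ ≤ ((y - 1) + (y - 1) ^ 2 / 2)⁻¹ :=
        inv_anti₀ (by positivity) (sub_one_add_sq_le_pinningMap_sub_one hs hy.le)
    _ = (y - 1)⁻¹ - (y - 1 + 2)⁻¹ := by field_simp; ring
    _ ≤ (y - 1)⁻¹ - (K + 2)⁻¹ := by gcongr

lemma log_pinningMap_le (hs : s ≠ 0) (hy : 1 < y) : log (pinningMap s y) ≤ s * log y := by
  have hys : 1 ≤ y ^ s := one_le_pow₀ hy.le
  have hle : pinningMap s y ≤ y ^ s := by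
    have : (1 : ℝ) ≤ s := by exact_mod_cast Nat.one_le_iff_ne_zero.2 hs
    rw [pinningMap, div_le_iff₀ (by positivity)]
    nlinarith
  rw [← log_pow]
  exact log_le_log (by linarith [one_lt_pinningMap hs hy]) hle

lemma mul_log_sub_log_le_log_pinningMap (hs : s ≠ 0) (hy : 0 < y) :
    s * log y - log s ≤ log (pinningMap s y) := by
  have hs0 : (0 : ℝ) < s := by positivity
  have hle : y ^ s / s ≤ pinningMap s y := by
    have : (1 : ℝ) ≤ s := by exact_mod_cast Nat.one_le_iff_ne_zero.2 hs
    rw [pinningMap]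
    gcongr
    linarith
  have := log_le_log (by positivity) hle
  rwa [log_div (by positivity) hs0.ne', log_pow] at this

end PinningMap

lemma antitone_inv_pow_mul_of_le_mul {c : ℝ} (hc : 0 < c) {a : ℕ → ℝ}
    (ha : ∀ n, a (n + 1) ≤ c * a n) : Antitone fun n => (c ^ n)⁻¹ * a n := by
  refine antitone_nat_of_succ_le fun n => ?_
  rw [pow_succ, mul_inv, mul_assoc]
  exact mul_le_mul_of_nonneg_left ((inv_mul_le_iff₀ hc).2 (ha n)) (by positivity)

lemma monotone_inv_pow_mul_of_mul_le {c : ℝ} (hc : 0 < c) {a : ℕ → ℝ}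
    (ha : ∀ n, c * a n ≤ a (n + 1)) : Monotone fun n => (c ^ n)⁻¹ * a n := by
  refine monotone_nat_of_le_succ fun n => ?_
  rw [pow_succ, mul_inv, mul_assoc]
  exact mul_le_mul_of_nonneg_left ((le_inv_mul_iff₀ hc).2 (ha n)) (by positivity)

lemma pow_eq_exp_mul_log {s : ℝ} (hs : 0 < s) (n : ℕ) : s ^ n = exp (n * log s) := by
  rw [exp_nat_mul, exp_log hs]

lemma inv_mul_exp_le_inv_pow {s A h : ℝ} (hs : 1 ≤ s) (hA : 1 ≤ A) (hh : 0 < h) {N : ℕ}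
    (hN : (N : ℝ) ≤ A / h + 1) : (A * s)⁻¹ * exp (-(A * s) / h) ≤ (s ^ N)⁻¹ := by
  have hs0 : 0 < s := by linarith
  have hlog : log s ≤ s := by linarith [log_le_sub_one_of_pos hs0]
  have hlog0 : 0 ≤ log s := log_nonneg hs
  rw [neg_div, exp_neg, ← mul_inv]
  refine inv_anti₀ (by positivity) ?_
  calc s ^ N = exp (N * log s) := pow_eq_exp_mul_log hs0 N
    _ ≤ exp ((A / h + 1) * log s) := by gcongr
    _ = s * exp (A * log s / h) := by
        rw [add_mul, one_mul, exp_add, exp_log hs0, mul_comm, div_mul_eq_mul_div]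
    _ ≤ (A * s) * exp (A * s / h) := by
        gcongr
        nlinarith

lemma inv_pow_le_mul_exp {s B h : ℝ} (hs : 1 < s) (hB : 0 < B) (hh : 0 < h) {M : ℕ}
    (hM : 1 / (B * (s - 1) * h) - 1 ≤ M) : (s ^ M)⁻¹ ≤ s * exp (-1 / (B * s * h)) := by
  have hs0 : 0 < s := by linarith
  have hlog : 1 - s⁻¹ ≤ log s := one_sub_inv_le_log_of_pos hs0
  have hlog' : 1 / (B * s * h) ≤ log s / (B * (s - 1) * h) := by
    rw [div_le_div_iff₀ (by positivity) (by nlinarith [mul_pos hB hh])]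
    have : 1 - s⁻¹ = (s - 1) / s := by field_simp
    rw [this, div_le_iff₀ hs0] at hlog
    nlinarith [mul_pos hB hh]
  calc (s ^ M)⁻¹ = exp (-(M * log s)) := by rw [pow_eq_exp_mul_log hs0, exp_neg]
    _ ≤ exp (-((1 / (B * (s - 1) * h) - 1) * log s)) := by
        gcongr
        exact log_nonneg hs.le
    _ = exp (log s + -(log s / (B * (s - 1) * h))) := by
        congr 1
        ring
    _ = s * exp (-(log s / (B * (s - 1) * h))) := by rw [exp_add, exp_log hs0]
    _ ≤ s * exp (-1 / (B * s * h)) := by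
        gcongr
        rw [neg_div]
        exact neg_le_neg hlog'

namespace PinningSeq

variable {s : ℕ} {x : ℕ → ℝ} (hx : ∀ n, x (n + 1) = pinningMap s (x n))
include hx

lemma one_lt (hs : s ≠ 0) (h0 : 1 < x 0) (n : ℕ) : 1 < x n := by
  induction n with
  | zero => exact h0
  | succ n ih => rw [hx]; exact one_lt_pinningMap hs ih

lemma monotone (hs : 2 ≤ s) (h0 : 1 < x 0) : Monotone x := by
  refine monotone_nat_of_le_succ fun n => ?_
  have := sub_one_add_sq_le_pinningMap_sub_one hs (one_lt hx (by omega) h0 n).le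
  rw [hx]
  nlinarith [sq_nonneg (x n - 1)]

lemma inv_sub_one_sub_le (hs : s ≠ 0) (h0 : 1 < x 0) (n : ℕ) :
    (x 0 - 1)⁻¹ - n * (s - 1) ≤ (x n - 1)⁻¹ := by
  induction n with
  | zero => simp
  | succ n ih =>
    have := inv_sub_one_sub_le_inv_pinningMap_sub_one hs (one_lt hx hs h0 n)
    rw [hx]
    push_cast
    linarith

lemma sub_one_le_two_mul (hs : s ≠ 0) (h0 : 1 < x 0) {n : ℕ}
    (hn : n * ((s : ℝ) - 1) ≤ (2 * (x 0 - 1))⁻¹) : x n - 1 ≤ 2 * (x 0 - 1) := by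
  have h := inv_sub_one_sub_le hx hs h0 n
  have : (2 * (x 0 - 1))⁻¹ ≤ (x n - 1)⁻¹ := by
    rw [mul_inv] at hn ⊢
    linarith
  rwa [inv_le_inv₀ (by positivity) (by linarith [one_lt hx hs h0 n])] at this

lemma inv_sub_one_le (hs : 2 ≤ s) (h0 : 1 < x 0) {K : ℝ} {n : ℕ} (hK : x n - 1 ≤ K) :
    (x n - 1)⁻¹ ≤ (x 0 - 1)⁻¹ - n / (K + 2) := by
  induction n with
  | zero => simp
  | succ n ih =>
    have hn : x n - 1 ≤ K := by linarith [monotone hx hs h0 n.le_succ]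
    have := inv_pinningMap_sub_one_le hs (one_lt hx (by omega) h0 n) hn
    rw [hx] at hK ⊢
    push_cast
    rw [add_div, one_div]
    linarith [ih hn]

lemma lt_sub_one (hs : 2 ≤ s) (h0 : 1 < x 0) {K : ℝ} {n : ℕ}
    (hn : (K + 2) * (x 0 - 1)⁻¹ ≤ n) : K < x n - 1 := by
  by_contra! hK
  have hxn := one_lt hx (by omega) h0 n
  have h := inv_sub_one_le hx hs h0 hK
  have : (x 0 - 1)⁻¹ ≤ n / (K + 2) := by
    rw [le_div_iff₀ (by linarith)]
    linarith
  have : 0 < (x n - 1)⁻¹ := inv_pos.2 (by linarith)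
  linarith

lemma limit_le (hs : s ≠ 0) (h0 : 1 < x 0) {f : ℝ}
    (hf : Tendsto (fun n => ((s : ℝ) ^ n)⁻¹ * log (x n)) atTop (𝓝 f)) (n : ℕ) :
    f ≤ ((s : ℝ) ^ n)⁻¹ * log (x n) := by
  have hanti := antitone_inv_pow_mul_of_le_mul (by positivity : (0 : ℝ) < s)
    (a := fun n => log (x n)) fun n => hx n ▸ log_pinningMap_le hs (one_lt hx hs h0 n)
  exact le_of_tendsto hf (eventually_atTop.2 ⟨n, fun m hm => hanti hm⟩)

lemma le_limit (hs : 2 ≤ s) (h0 : 1 < x 0) {f : ℝ}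
    (hf : Tendsto (fun n => ((s : ℝ) ^ n)⁻¹ * log (x n)) atTop (𝓝 f)) (n : ℕ) :
    ((s : ℝ) ^ n)⁻¹ * (log (x n) - log s / (s - 1)) ≤ f := by
  have hs1 : (0 : ℝ) < s - 1 := by
    have : (2 : ℝ) ≤ s := by exact_mod_cast hs
    linarith
  have hmono := monotone_inv_pow_mul_of_mul_le (by positivity : (0 : ℝ) < s)
    (a := fun n => log (x n) - log s / (s - 1)) fun n => by
      have := mul_log_sub_log_le_log_pinningMap (s := s) (by omega)
        (by linarith [one_lt hx (by omega) h0 n] : 0 < x n)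
      have hL : (s - 1) * (log s / (s - 1)) = log s := mul_div_cancel₀ _ hs1.ne'
      rw [hx]
      linarith
  have hL : 0 ≤ log s / (s - 1) := div_nonneg (log_nonneg (by linarith)) hs1.le
  refine ge_of_tendsto hf (eventually_atTop.2 ⟨n, fun m hm => (hmono hm).trans ?_⟩)
  exact mul_le_mul_of_nonneg_left (by linarith) (by positivity)

section Bounds

variable {h f : ℝ} (hx0 : x 0 = exp h)
  (hf : Tendsto (fun n => ((s : ℝ) ^ n)⁻¹ * log (x n)) atTop (𝓝 f))
include hx0 hf

lemma inv_mul_exp_le_limit (hs : 2 ≤ s) (hh : 0 < h) :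
    (10 * (s : ℝ))⁻¹ * exp (-(10 * s) / h) ≤ f := by
  have hs2 : (2 : ℝ) ≤ s := by exact_mod_cast hs
  have h0 : 1 < x 0 := hx0 ▸ one_lt_exp_iff.2 hh
  have hd0 : h ≤ x 0 - 1 := by linarith [hx0 ▸ add_one_le_exp h]
  set N := ⌈10 / h⌉₊
  -- `x N - 1 > 8` makes `log (x N) ≥ 2`, while `log s / (s - 1) ≤ 1`.
  have hN : (8 + 2) * (x 0 - 1)⁻¹ ≤ N := by
    calc (8 + 2) * (x 0 - 1)⁻¹ ≤ 10 / h := by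
          rw [div_eq_mul_inv]; gcongr; norm_num
      _ ≤ N := Nat.le_ceil _
  have hlogN : 2 ≤ log (x N) := by
    rw [le_log_iff_exp_le (by linarith [lt_sub_one hx hs h0 hN])]
    have : exp 2 < 9 := by
      rw [show (2 : ℝ) = 1 + 1 by norm_num, exp_add]
      nlinarith [exp_one_lt_three, exp_pos 1]
    linarith [lt_sub_one hx hs h0 hN]
  have hL : log s / (s - 1) ≤ 1 := by
    rw [div_le_one (by linarith)]
    exact log_le_sub_one_of_pos (by linarith)
  calc (10 * (s : ℝ))⁻¹ * exp (-(10 * s) / h) ≤ ((s : ℝ) ^ N)⁻¹ :=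
        inv_mul_exp_le_inv_pow (by linarith) (by norm_num) hh (Nat.ceil_lt_add_one (by positivity)).le
    _ ≤ ((s : ℝ) ^ N)⁻¹ * (log (x N) - log s / (s - 1)) :=
        le_mul_of_one_le_right (by positivity) (by linarith)
    _ ≤ f := le_limit hx hs h0 hf N

lemma limit_le_mul_exp (hs : 2 ≤ s) (hh0 : 0 < h) (hh1 : h ≤ 1) :
    f ≤ 10 * s * exp (-1 / (10 * s * h)) := by
  have hs1 : (1 : ℝ) < s := by exact_mod_cast hs
  have h0 : 1 < x 0 := hx0 ▸ one_lt_exp_iff.2 hh0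
  have hd0 : x 0 - 1 ≤ 2 * h := by
    have := abs_exp_sub_one_le (x := h) (by rwa [abs_of_pos hh0])
    rwa [abs_of_pos (by linarith), abs_of_pos hh0, ← hx0] at this
  set M := ⌊1 / (4 * ((s : ℝ) - 1) * h)⌋₊
  have hM : M * ((s : ℝ) - 1) ≤ (2 * (x 0 - 1))⁻¹ := by
    calc M * ((s : ℝ) - 1) ≤ 1 / (4 * ((s : ℝ) - 1) * h) * (s - 1) :=
          mul_le_mul_of_nonneg_right (Nat.floor_le (div_nonneg zero_le_one (by nlinarith)))
            (by linarith)
      _ = (2 * (2 * h))⁻¹ := by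
          have : (s : ℝ) - 1 ≠ 0 := by linarith
          field_simp
          norm_num
      _ ≤ (2 * (x 0 - 1))⁻¹ := by gcongr
  have hdM := sub_one_le_two_mul hx (by omega) h0 hM
  have hlogM : log (x M) ≤ 4 * h := by
    linarith [log_le_sub_one_of_pos (by linarith [one_lt hx (by omega) h0 M] : 0 < x M)]
  calc f ≤ ((s : ℝ) ^ M)⁻¹ * log (x M) := limit_le hx (by omega) h0 hf M
    _ ≤ s * exp (-1 / (4 * s * h)) * (4 * h) :=
        mul_le_mul (inv_pow_le_mul_exp hs1 (by norm_num) hh0 (Nat.sub_one_lt_floor _).le) hlogM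
          (log_nonneg (one_lt hx (by omega) h0 M).le) (by positivity)
    _ ≤ s * exp (-1 / (10 * s * h)) * 10 := by
        have hexp : exp (-1 / (4 * s * h)) ≤ exp (-1 / (10 * s * h)) := by
          rw [exp_le_exp, neg_div, neg_div, neg_le_neg_iff]
          gcongr
          norm_num
        exact mul_le_mul (mul_le_mul_of_nonneg_left hexp (by positivity)) (by linarith)
          (by positivity) (by positivity)
    _ = 10 * s * exp (-1 / (10 * s * h)) := by ring

end Bounds

end PinningSeq

theorem stmt_11 (s : ℕ) (hs : 2 ≤ s) (r : ℝ → ℕ → ℝ)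
    (hr0 : ∀ h, r h 0 = Real.exp h)
    (hrec : ∀ h n, r h (n+1) = (r h n ^ s + s - 1) / s)
    (F : ℝ → ℝ)
    (hF : ∀ h, Filter.Tendsto (fun n : ℕ => ((s : ℝ) ^ n)⁻¹ * Real.log (r h n))
      Filter.atTop (nhds (F h))) :
    ∃ c : ℝ, 1 < c ∧ ∀ h ∈ Set.Ioo (0:ℝ) 1,
      c⁻¹ * Real.exp (-c / h) ≤ F h ∧ F h ≤ c * Real.exp (-1 / (c * h)) := by
  have hs2 : (2 : ℝ) ≤ s := by exact_mod_cast hs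
  refine ⟨10 * s, by linarith, fun h ⟨hh0, hh1⟩ => ⟨?_, ?_⟩⟩
  · exact PinningSeq.inv_mul_exp_le_limit (hrec h) (hr0 h) (hF h) hs hh0
  · exact PinningSeq.limit_le_mul_exp (hrec h) (hr0 h) (hF h) hs hh0 hh1.le
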